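/- If A ≤◇ B in the diamond order (range(A) ⊆ range(B), range(A*) ⊆ range(B*), and AA*A = AB*A), then A ≤⁺ B in the plus order: there exist bounded idempotents Q̃ and Q with A = Q̃ B Q. -/

import Mathlib

open ContinuousLinearMap
open scoped InnerProduct

/-!
Let `P` and `Q` be the orthogonal projections onto `(ker A*)ᗮ` and `(ker A)ᗮ`, the closures of the
ranges of `A` and `A*`; then `A = P A Q` always holds. Taking adjoints in `A A* A = A B* A` gives
`A* (B - A) A* = 0`: `B - A` maps `range A*` into `ker A*`, and by continuity
`P (B - A) Q = 0`. Hence `A = P B Q`.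
-/

namespace ContinuousLinearMap

variable {𝕜 E F G : Type*} [RCLike 𝕜]
  [NormedAddCommGroup E] [InnerProductSpace 𝕜 E] [CompleteSpace E]
  [NormedAddCommGroup F] [InnerProductSpace 𝕜 F]
  [NormedAddCommGroup G] [InnerProductSpace 𝕜 G]

theorem comp_starProjection_orthogonal_ker (T : E →L[𝕜] F) :
    T ∘L T.kerᗮ.starProjection = T := by
  ext x
  conv_rhs => rw [← T.ker.starProjection_add_starProjection_orthogonal x]
  have hker : T (T.ker.starProjection x) = 0 := T.ker.starProjection_apply_mem x
  rw [map_add, hker, zero_add]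
  rfl

theorem starProjection_orthogonal_ker_adjoint_comp [CompleteSpace F] (T : F →L[𝕜] E) :
    T†.kerᗮ.starProjection ∘L T = T := by
  apply adjoint.injective
  rw [adjoint_comp, (isSelfAdjoint_starProjection _).adjoint_eq,
    comp_starProjection_orthogonal_ker]

theorem starProjection_orthogonal_ker_comp_eq_zero {T : E →L[𝕜] F} {Y : G →L[𝕜] E}
    (h : T ∘L Y = 0) : T.kerᗮ.starProjection ∘L Y = 0 := by
  ext x
  exact Submodule.starProjection_orthogonal_apply_eq_zero (DFunLike.congr_fun h x)

theorem comp_starProjection_orthogonal_ker_eq_zero [CompleteSpace F] [CompleteSpace G]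
    {T : E →L[𝕜] F} {Z : E →L[𝕜] G} (h : Z ∘L T† = 0) : Z ∘L T.kerᗮ.starProjection = 0 := by
  apply adjoint.injective
  rw [adjoint_comp, (isSelfAdjoint_starProjection _).adjoint_eq, map_zero]
  refine starProjection_orthogonal_ker_comp_eq_zero ?_
  rw [← adjoint_adjoint T, ← adjoint_comp, h, map_zero]

theorem adjoint_comp_sub_comp_adjoint_eq_zero [CompleteSpace F] {A B : E →L[𝕜] F}
    (h : A ∘L (A† ∘L A) = A ∘L (B† ∘L A)) : A† ∘L ((B - A) ∘L A†) = 0 := by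
  have h' := congrArg adjoint h
  simp only [adjoint_comp, adjoint_adjoint, comp_assoc] at h'
  rw [sub_comp, comp_sub, ← h', sub_self]

theorem eq_starProjection_comp_comp_starProjection [CompleteSpace F] {A B : E →L[𝕜] F}
    (h : A ∘L (A† ∘L A) = A ∘L (B† ∘L A)) :
    A = A†.kerᗮ.starProjection ∘L (B ∘L A.kerᗮ.starProjection) := by
  have hA : A† ∘L ((B - A) ∘L A†) = 0 := adjoint_comp_sub_comp_adjoint_eq_zero h
  have hQ : (A† ∘L (B - A)) ∘L A.kerᗮ.starProjection = 0 :=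
    comp_starProjection_orthogonal_ker_eq_zero (by rwa [comp_assoc])
  have hBA : A†.kerᗮ.starProjection ∘L ((B - A) ∘L A.kerᗮ.starProjection) = 0 :=
    starProjection_orthogonal_ker_comp_eq_zero (by rwa [← comp_assoc])
  rw [sub_comp, comp_sub, sub_eq_zero, comp_starProjection_orthogonal_ker,
    starProjection_orthogonal_ker_adjoint_comp] at hBA
  exact hBA.symm

end ContinuousLinearMap

theorem stmt6 {H K : Type*} [NormedAddCommGroup H] [InnerProductSpace ℂ H] [CompleteSpace H]
    [NormedAddCommGroup K] [InnerProductSpace ℂ K] [CompleteSpace K]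
    (A B : H →L[ℂ] K)
    (h3 : A ∘L ((adjoint A) ∘L A) = A ∘L ((adjoint B) ∘L A)) :
    ∃ (Qt : K →L[ℂ] K) (Q : H →L[ℂ] H),
      Qt ∘L Qt = Qt ∧ Q ∘L Q = Q ∧ A = Qt ∘L (B ∘L Q) :=
  ⟨_, _, Submodule.isIdempotentElem_starProjection _, Submodule.isIdempotentElem_starProjection _,
    eq_starProjection_comp_comp_starProjection h3⟩
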